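/- arXiv:2004.00734 — 2 statements merged into one kernel-verified Lean document; each statement's English description precedes it below -/
import Mathlib

section
/- Every graph in the class O_Δ is overfull: if G is obtained from the complete bipartite graph K_{n₁,n₂} with 3 ≤ n₁ ≤ Δ−1, n₂ = Δ−2, n₁+n₂ odd, by adding a 2-regular simple graph on the n₁-side and a (Δ−1−n₁)-regular simple graph on the n₂-side, then |E(G)| > Δ·⌊(n₁+n₂)/2⌋. -/
open SimpleGraph

/-- Every graph in the class `O_Δ` is overfull: if the vertex set of `G` is partitioned
into `A` and `B` with `|A| = n₁`, `|B| = n₂ = Δ − 2`, `3 ≤ n₁ ≤ Δ − 1`, `n₁ + n₂` odd,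
every vertex of `A` is adjacent to every vertex of `B`, each vertex of `A` has exactly
`2` neighbors in `A`, and each vertex of `B` has exactly `Δ − 1 − n₁` neighbors in `B`,
then `|E(G)| > Δ * ⌊(n₁ + n₂)/2⌋`. -/
theorem O_Delta_overfull {V : Type*} [Fintype V] [DecidableEq V]
    (G : SimpleGraph V) [DecidableRel G.Adj] (Δ n₁ n₂ : ℕ) (A B : Finset V)
    (hΔ : 4 ≤ Δ) (hn₁l : 3 ≤ n₁) (hn₁u : n₁ ≤ Δ - 1) (hn₂ : n₂ = Δ - 2)
    (hodd : Odd (n₁ + n₂))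
    (hA : A.card = n₁) (hB : B.card = n₂)
    (hdisj : Disjoint A B) (hcover : ∀ v : V, v ∈ A ∨ v ∈ B)
    (hbip : ∀ a ∈ A, ∀ b ∈ B, G.Adj a b)
    (hAdeg : ∀ a ∈ A, (G.neighborFinset a ∩ A).card = 2)
    (hBdeg : ∀ b ∈ B, (G.neighborFinset b ∩ B).card = Δ - 1 - n₁) :
    Δ * ((n₁ + n₂) / 2) < G.edgeFinset.card := by
  have huniv : A ∪ B = Finset.univ := by
    ext v
    simpa using hcover v
  have hsplit : ∀ v : V, G.degree v
      = (G.neighborFinset v ∩ A).card + (G.neighborFinset v ∩ B).card := by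
    intro v
    rw [degree, ← Finset.card_union_of_disjoint
      (hdisj.mono Finset.inter_subset_right Finset.inter_subset_right),
      ← Finset.inter_union_distrib_left, huniv, Finset.inter_univ]
  have hdegA : ∀ a ∈ A, G.degree a = 2 + n₂ := by
    intro a ha
    have hBsub : G.neighborFinset a ∩ B = B := by
      apply Finset.inter_eq_right.mpr
      intro b hb
      rw [mem_neighborFinset]
      exact hbip a ha b hb
    rw [hsplit a, hAdeg a ha, hBsub, hB]
  have hdegB : ∀ b ∈ B, G.degree b = n₁ + (Δ - 1 - n₁) := by
    intro b hb
    have hAsub : G.neighborFinset b ∩ A = A := by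
      apply Finset.inter_eq_right.mpr
      intro a ha
      rw [mem_neighborFinset]
      exact (hbip a ha b hb).symm
    rw [hsplit b, hAsub, hBdeg b hb, hA]
  have hsum : ∑ v : V, G.degree v = n₁ * (2 + n₂) + n₂ * (n₁ + (Δ - 1 - n₁)) := by
    rw [← huniv, Finset.sum_union hdisj]
    rw [Finset.sum_congr rfl hdegA, Finset.sum_congr rfl hdegB,
      Finset.sum_const, Finset.sum_const, hA, hB, smul_eq_mul, smul_eq_mul]
  have h2E : 2 * G.edgeFinset.card = n₁ * (2 + n₂) + n₂ * (n₁ + (Δ - 1 - n₁)) := by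
    rw [← G.sum_degrees_eq_twice_card_edges, hsum]
  -- arithmetic
  have hΔn : Δ - 1 - n₁ + n₁ = Δ - 1 := by omega
  rw [add_comm n₁ (Δ - 1 - n₁), hΔn] at h2E
  obtain ⟨k, hk⟩ := hodd
  have hΔeq : Δ = n₂ + 2 := by omega
  rw [hk]
  have hdiv : (2 * k + 1) / 2 = k := by omega
  rw [hdiv]
  subst hΔeq
  have h1 : n₂ + 2 - 1 = n₂ + 1 := by omega
  rw [h1] at h2E
  nlinarith [h2E, hk]
end

section
/- If G is an HZ-graph with maximum degree Δ (a connected Class 2 graph with Δ(G_Δ) ≤ 2), then the core G_Δ is 2-regular, i.e., every vertex of degree Δ has exactly two neighbors of degree Δ. -/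
open SimpleGraph

/-- A proper edge coloring of `G` with `k` colors. -/
def IsProperEdgeColoring {V : Type*} (G : SimpleGraph V) (k : ℕ) (C : Sym2 V → ℕ) : Prop :=
  (∀ e ∈ G.edgeSet, C e < k) ∧
    ∀ e₁ ∈ G.edgeSet, ∀ e₂ ∈ G.edgeSet, e₁ ≠ e₂ → (∃ v, v ∈ e₁ ∧ v ∈ e₂) → C e₁ ≠ C e₂

/-- The chromatic index of `G`. -/
noncomputable def chromaticIndex {V : Type*} (G : SimpleGraph V) : ℕ :=
  sInf {k | ∃ C, IsProperEdgeColoring G k C}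

namespace HZ

set_option linter.unusedSectionVars false

variable {V : Type*} [Fintype V] [DecidableEq V]

/-- `c` is a color `< k` missing at `v` in `H` under the coloring `φ`. -/
def MissP (H : SimpleGraph V) (φ : Sym2 V → ℕ) (k : ℕ) (v : V) (c : ℕ) : Prop :=
  c < k ∧ ∀ w, H.Adj v w → φ s(v, w) ≠ c

theorem MissP.anti {H₁ H₂ : SimpleGraph V} (h : H₂ ≤ H₁) {φ k v c}
    (hm : MissP H₁ φ k v c) : MissP H₂ φ k v c :=
  ⟨hm.1, fun w hw => hm.2 w (h hw)⟩

theorem proper_mono {H₁ H₂ : SimpleGraph V} (h : H₂ ≤ H₁) {k φ}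
    (hφ : IsProperEdgeColoring H₁ k φ) : IsProperEdgeColoring H₂ k φ :=
  ⟨fun e he => hφ.1 e (edgeSet_mono h he),
   fun e₁ h₁ e₂ h₂ hne hsh => hφ.2 e₁ (edgeSet_mono h h₁) e₂ (edgeSet_mono h h₂) hne hsh⟩

theorem proper_lt {H : SimpleGraph V} {k : ℕ} {φ} (hφ : IsProperEdgeColoring H k φ)
    {a b : V} (hab : H.Adj a b) : φ s(a, b) < k :=
  hφ.1 _ (H.mem_edgeSet.2 hab)

theorem proper_ne {H : SimpleGraph V} {k : ℕ} {φ} (hφ : IsProperEdgeColoring H k φ)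
    {a b c : V} (hab : H.Adj a b) (hac : H.Adj a c) (hbc : b ≠ c) :
    φ s(a, b) ≠ φ s(a, c) :=
  hφ.2 _ (H.mem_edgeSet.2 hab) _ (H.mem_edgeSet.2 hac)
    (fun hh => hbc (Sym2.congr_right.1 hh))
    ⟨a, Sym2.mem_iff.2 (Or.inl rfl), Sym2.mem_iff.2 (Or.inl rfl)⟩

theorem memN {G : SimpleGraph V} {v : V} [Fintype (G.neighborSet v)] {w : V} :
    w ∈ G.neighborFinset v ↔ G.Adj v w := SimpleGraph.mem_neighborFinset G v w

/-- Extending a proper coloring of `H - xy` to `H` by giving `xy` a color missing at both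
endpoints. -/
theorem extend_one {H : SimpleGraph V} {x y : V} (hxy : H.Adj x y) {k γ : ℕ} {φ}
    (hφ : IsProperEdgeColoring (H.deleteEdges {s(x, y)}) k φ)
    (hx : MissP (H.deleteEdges {s(x, y)}) φ k x γ)
    (hy : MissP (H.deleteEdges {s(x, y)}) φ k y γ) :
    IsProperEdgeColoring H k (Function.update φ s(x, y) γ) := by
  set H' := H.deleteEdges {s(x, y)} with hH'
  have hmem : ∀ e ∈ H.edgeSet, e ≠ s(x, y) → e ∈ H'.edgeSet := by
    intro e he hne
    rw [hH', edgeSet_deleteEdges]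
    exact ⟨he, by simpa using hne⟩
  have key : ∀ e ∈ H.edgeSet, e ≠ s(x, y) → (∃ v, v ∈ e ∧ v ∈ s(x, y)) → φ e ≠ γ := by
    rintro e he hne ⟨v, hv1, hv2⟩
    obtain ⟨w, rfl⟩ := Sym2.mem_iff_exists.1 hv1
    have hadj : H'.Adj v w := (H'.mem_edgeSet).1 (hmem _ he hne)
    rcases Sym2.mem_iff.1 hv2 with rfl | rfl
    · exact hx.2 w hadj
    · exact hy.2 w hadj
  constructor
  · intro e he
    by_cases h : e = s(x, y)
    · subst h; rw [Function.update_self]; exact hx.1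
    · rw [Function.update_of_ne h]; exact hφ.1 e (hmem e he h)
  · intro e₁ h₁ e₂ h₂ hne hsh
    by_cases q1 : e₁ = s(x, y) <;> by_cases q2 : e₂ = s(x, y)
    · exact absurd (q1.trans q2.symm) hne
    · subst q1
      rw [Function.update_self, Function.update_of_ne q2]
      intro hc
      obtain ⟨v, hv1, hv2⟩ := hsh
      exact key e₂ h₂ q2 ⟨v, hv2, hv1⟩ hc.symm
    · subst q2
      rw [Function.update_self, Function.update_of_ne q1]
      exact key e₁ h₁ q1 hsh
    · rw [Function.update_of_ne q1, Function.update_of_ne q2]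
      exact hφ.2 e₁ (hmem _ h₁ q1) e₂ (hmem _ h₂ q2) hne hsh

/-! ### Kempe chain (two-colored subgraph) machinery -/

/-- The spanning subgraph of edges colored `α` or `γ`. -/
def colSub (H : SimpleGraph V) (φ : Sym2 V → ℕ) (α γ : ℕ) : SimpleGraph V where
  Adj a b := H.Adj a b ∧ (φ s(a, b) = α ∨ φ s(a, b) = γ)
  symm := ⟨by
    rintro a b ⟨h1, h2⟩
    refine ⟨h1.symm, ?_⟩
    rwa [Sym2.eq_swap]⟩
  loopless := ⟨fun a h => H.irrefl h.1⟩

theorem colSub_le {H : SimpleGraph V} {φ α γ} : colSub H φ α γ ≤ H := fun _ _ h => h.1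

def swapCol (α γ c : ℕ) : ℕ := if c = α then γ else α

theorem swapCol_or (α γ c : ℕ) : swapCol α γ c = γ ∨ swapCol α γ c = α := by
  unfold swapCol; split
  · exact Or.inl rfl
  · exact Or.inr rfl

open Classical in
/-- Swap the colors `α`, `γ` on the Kempe chain through `u₀`. -/
noncomputable def swapped (H : SimpleGraph V) (φ : Sym2 V → ℕ) (α γ : ℕ) (u₀ : V) :
    Sym2 V → ℕ := fun e =>
  if (∃ a b, e = s(a, b) ∧ (colSub H φ α γ).Adj a b ∧ (colSub H φ α γ).Reachable u₀ a)
  then swapCol α γ (φ e) else φ e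

theorem swapped_eq_self {H : SimpleGraph V} {φ α γ} {u₀ a b : V}
    (h : ¬((colSub H φ α γ).Adj a b ∧ (colSub H φ α γ).Reachable u₀ a)) :
    swapped H φ α γ u₀ s(a, b) = φ s(a, b) := by
  rw [swapped, if_neg]
  rintro ⟨a', b', he, h1, h2⟩
  rcases Sym2.eq_iff.1 he with ⟨rfl, rfl⟩ | ⟨rfl, rfl⟩
  · exact h ⟨h1, h2⟩
  · exact h ⟨h1.symm, h2.trans h1.reachable⟩

theorem swapped_eq_swap {H : SimpleGraph V} {φ α γ} {u₀ a b : V}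
    (h1 : (colSub H φ α γ).Adj a b) (h2 : (colSub H φ α γ).Reachable u₀ a) :
    swapped H φ α γ u₀ s(a, b) = swapCol α γ (φ s(a, b)) := by
  rw [swapped, if_pos ⟨a, b, rfl, h1, h2⟩]

theorem swapped_cases {H : SimpleGraph V} {φ α γ} {u₀ : V} (e : Sym2 V) :
    swapped H φ α γ u₀ e = φ e ∨ swapped H φ α γ u₀ e = swapCol α γ (φ e) := by
  unfold swapped; split
  · exact Or.inr rfl
  · exact Or.inl rfl

theorem proper_swapped {H : SimpleGraph V} {k : ℕ} {φ} (hφ : IsProperEdgeColoring H k φ)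
    {α γ : ℕ} (hα : α < k) (hγ : γ < k) (hαγ : α ≠ γ) (u₀ : V) :
    IsProperEdgeColoring H k (swapped H φ α γ u₀) := by
  constructor
  · intro e he
    rcases swapped_cases (H := H) (φ := φ) (α := α) (γ := γ) (u₀ := u₀) e with h | h <;> rw [h]
    · exact hφ.1 e he
    · rcases swapCol_or α γ (φ e) with h' | h' <;> rw [h']
      · exact hγ
      · exact hα
  · intro e₁ h₁ e₂ h₂ hne hsh
    obtain ⟨v, hv1, hv2⟩ := hsh
    obtain ⟨b, rfl⟩ := Sym2.mem_iff_exists.1 hv1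
    obtain ⟨d, rfl⟩ := Sym2.mem_iff_exists.1 hv2
    have hvb : H.Adj v b := (H.mem_edgeSet).1 h₁
    have hvd : H.Adj v d := (H.mem_edgeSet).1 h₂
    have hbd : b ≠ d := fun h => hne (by rw [h])
    have hne' : φ s(v, b) ≠ φ s(v, d) := proper_ne hφ hvb hvd hbd
    by_cases c1 : (colSub H φ α γ).Adj v b ∧ (colSub H φ α γ).Reachable u₀ v <;>
      by_cases c2 : (colSub H φ α γ).Adj v d ∧ (colSub H φ α γ).Reachable u₀ v
    · rw [swapped_eq_swap c1.1 c1.2, swapped_eq_swap c2.1 c2.2]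
      rcases c1.1.2 with h | h <;> rcases c2.1.2 with h' | h' <;>
        simp only [swapCol, h, h', if_pos rfl, hαγ, if_neg] <;>
        first
          | (exact fun hh => hne' (h.trans h'.symm))
          | (simp [hαγ, Ne.symm hαγ])
    · rw [swapped_eq_swap c1.1 c1.2, swapped_eq_self c2]
      intro hc
      rcases swapCol_or α γ (φ s(v, b)) with h' | h' <;> rw [h'] at hc <;>
        exact c2 ⟨⟨hvd, by rw [← hc]; tauto⟩, c1.2⟩
    · rw [swapped_eq_swap c2.1 c2.2, swapped_eq_self c1]
      intro hc
      rcases swapCol_or α γ (φ s(v, d)) with h' | h' <;> rw [h'] at hc <;>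
        exact c1 ⟨⟨hvb, by rw [hc]; tauto⟩, c2.2⟩
    · rw [swapped_eq_self c1, swapped_eq_self c2]
      exact hφ.2 _ h₁ _ h₂ hne ⟨v, hv1, hv2⟩

theorem swapped_at_unreachable {H : SimpleGraph V} {φ α γ} {u₀ v : V}
    (hr : ¬ (colSub H φ α γ).Reachable u₀ v) (w : V) :
    swapped H φ α γ u₀ s(v, w) = φ s(v, w) :=
  swapped_eq_self (fun h => hr h.2)

theorem MissP_swap_unreach {H : SimpleGraph V} {φ α γ} {u₀ v : V} {k c : ℕ}
    (hr : ¬ (colSub H φ α γ).Reachable u₀ v)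
    (h : MissP H φ k v c) : MissP H (swapped H φ α γ u₀) k v c :=
  ⟨h.1, fun w hw => by rw [swapped_at_unreachable hr]; exact h.2 w hw⟩

theorem MissP_swap_base {H : SimpleGraph V} {φ} {α γ k : ℕ} {u₀ : V}
    (hm : MissP H φ k u₀ γ) (hα : α < k) (hαγ : α ≠ γ) :
    MissP H (swapped H φ α γ u₀) k u₀ α := by
  refine ⟨hα, fun w hw hc => ?_⟩
  by_cases hS : (colSub H φ α γ).Adj u₀ w
  · rw [swapped_eq_swap hS (Reachable.refl u₀)] at hc
    rcases hS.2 with h | h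
    · rw [swapCol, if_pos h] at hc; exact hαγ hc.symm
    · exact hm.2 w hw h
  · rw [swapped_eq_self (fun h => hS h.1)] at hc
    exact hS ⟨hw, Or.inl hc⟩

theorem MissP_swap_other {H : SimpleGraph V} {φ} {α γ k c : ℕ} {u₀ v : V}
    (hcα : c ≠ α) (hcγ : c ≠ γ) (h : MissP H φ k v c) :
    MissP H (swapped H φ α γ u₀) k v c := by
  refine ⟨h.1, fun w hw hc => ?_⟩
  rcases swapped_cases (H := H) (φ := φ) (α := α) (γ := γ) (u₀ := u₀) s(v, w) with hh | hh <;>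
    rw [hh] at hc
  · exact h.2 w hw hc
  · rcases swapCol_or α γ (φ s(v, w)) with h' | h' <;> rw [h'] at hc
    · exact hcγ hc.symm
    · exact hcα hc.symm

theorem low_of_miss {H : SimpleGraph V} {k : ℕ} {φ} (hφ : IsProperEdgeColoring H k φ)
    {α γ c : ℕ} {v : V} (hc : c = α ∨ c = γ)
    (hmiss : ∀ w, H.Adj v w → φ s(v, w) ≠ c) :
    ∀ w w', (colSub H φ α γ).Adj v w → (colSub H φ α γ).Adj v w' → w = w' := by
  rintro w w' ⟨h1, h2⟩ ⟨h1', h2'⟩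
  by_contra hne
  have hd := proper_ne hφ h1 h1' hne
  rcases h2 with h | h <;> rcases h2' with h' | h'
  · exact hd (h.trans h'.symm)
  · rcases hc with rfl | rfl
    · exact hmiss w h1 h
    · exact hmiss w' h1' h'
  · rcases hc with rfl | rfl
    · exact hmiss w' h1' h'
    · exact hmiss w h1 h
  · exact hd (h.trans h'.symm)

theorem colSub_max {H : SimpleGraph V} {k : ℕ} {φ} (hφ : IsProperEdgeColoring H k φ)
    {α γ : ℕ} : ∀ v w₁ w₂ w₃, (colSub H φ α γ).Adj v w₁ → (colSub H φ α γ).Adj v w₂ →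
      (colSub H φ α γ).Adj v w₃ → w₁ = w₂ ∨ w₁ = w₃ ∨ w₂ = w₃ := by
  intro v w₁ w₂ w₃ h1 h2 h3
  by_contra hne
  push_neg at hne
  obtain ⟨n12, n13, n23⟩ := hne
  rcases h1.2 with a1 | a1 <;> rcases h2.2 with a2 | a2 <;> rcases h3.2 with a3 | a3
  · exact proper_ne hφ h1.1 h2.1 n12 (a1.trans a2.symm)
  · exact proper_ne hφ h1.1 h2.1 n12 (a1.trans a2.symm)
  · exact proper_ne hφ h1.1 h3.1 n13 (a1.trans a3.symm)
  · exact proper_ne hφ h2.1 h3.1 n23 (a2.trans a3.symm)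
  · exact proper_ne hφ h2.1 h3.1 n23 (a2.trans a3.symm)
  · exact proper_ne hφ h1.1 h3.1 n13 (a1.trans a3.symm)
  · exact proper_ne hφ h1.1 h2.1 n12 (a1.trans a2.symm)
  · exact proper_ne hφ h1.1 h2.1 n12 (a1.trans a2.symm)

/-! ### A connected graph of max degree two has at most two "ends" -/

open Classical in
noncomputable def mS (S : SimpleGraph V) : ℕ :=
  (Finset.univ.filter fun p : V × V => S.Adj p.1 p.2).card

theorem mS_lt {S : SimpleGraph V} {a b : V} (h : S.Adj a b) :
    mS (S.deleteEdges {s(a, b)}) < mS S := by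
  classical
  apply Finset.card_lt_card
  refine (Finset.ssubset_iff_of_subset ?_).2 ?_
  · intro p hp
    simp only [Finset.mem_filter, Finset.mem_univ, true_and, deleteEdges_adj] at hp ⊢
    exact hp.1
  · refine ⟨(a, b), ?_, ?_⟩
    · simp [h]
    · simp [deleteEdges_adj]

theorem mS_pos {S : SimpleGraph V} {a b : V} (h : S.Adj a b) : 0 < mS S := by
  classical
  apply Finset.card_pos.2
  exact ⟨(a, b), by simp [h]⟩

theorem three_low (n : ℕ) : ∀ (S : SimpleGraph V), mS S ≤ n → ∀ a b c : V,
    a ≠ b → a ≠ c → b ≠ c →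
    S.Reachable a b → S.Reachable a c →
    (∀ w w', S.Adj a w → S.Adj a w' → w = w') →
    (∀ w w', S.Adj b w → S.Adj b w' → w = w') →
    (∀ w w', S.Adj c w → S.Adj c w' → w = w') →
    (∀ v w₁ w₂ w₃, S.Adj v w₁ → S.Adj v w₂ → S.Adj v w₃ → w₁ = w₂ ∨ w₁ = w₃ ∨ w₂ = w₃) →
    False := by
  induction n with
  | zero =>
    intro S hS a b c hab _ _ hrb _ _ _ _ _
    obtain ⟨p⟩ := hrb
    cases p with
    | nil => exact hab rfl
    | cons h _ => have := mS_pos h; omega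
  | succ n ih =>
    intro S hS a b c hab hac hbc hrb hrc la lb lc hmax
    obtain ⟨p0⟩ := hrb
    obtain ⟨p, hp⟩ := p0.toPath
    cases p with
    | nil => exact hab rfl
    | @cons _ z _ h q =>
      rw [Walk.cons_isPath_iff] at hp
      obtain ⟨hq, haq⟩ := hp
      obtain ⟨p0'⟩ := hrc
      obtain ⟨p', hp'⟩ := p0'.toPath
      cases p' with
      | nil => exact hac rfl
      | @cons _ z' _ h' q' =>
        rw [Walk.cons_isPath_iff] at hp'
        obtain ⟨hq', haq'⟩ := hp'
        obtain rfl : z' = z := la z' z h' h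
        set S₂ := S.deleteEdges {s(a, z')} with hS₂
        have htrans : ∀ {u : V} (r : S.Walk z' u), a ∉ r.support →
            (∀ e ∈ r.edges, e ∈ S₂.edgeSet) := by
          intro u r har e he
          rw [hS₂, edgeSet_deleteEdges]
          refine ⟨r.edges_subset_edgeSet he, ?_⟩
          simp only [Set.mem_singleton_iff]
          intro hee
          subst hee
          exact har (r.fst_mem_support_of_mem_edges he)
        have hS₂le : S₂ ≤ S := deleteEdges_le _
        have hS₂m : mS S₂ ≤ n := by
          have h2 := mS_lt h
          rw [← hS₂] at h2
          omega
        have hz_del : ¬ S₂.Adj z' a := by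
          rw [hS₂, deleteEdges_adj]
          rintro ⟨_, hh⟩
          exact hh (by simp [Sym2.eq_swap])
        by_cases hzb : z' = b
        · subst hzb
          have q₂' := q'.transfer S₂ (htrans q' haq')
          cases q₂' with
          | nil => exact hbc rfl
          | cons h₂ _ =>
            have hwa := lb _ a (hS₂le h₂) h.symm
            subst hwa
            exact hz_del h₂
        · by_cases hzc : z' = c
          · subst hzc
            have q₂ := q.transfer S₂ (htrans q haq)
            cases q₂ with
            | nil => exact hbc rfl
            | cons h₂ _ =>
              have hwa := lc _ a (hS₂le h₂) h.symm
              subst hwa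
              exact hz_del h₂
          · have q₂ := q.transfer S₂ (htrans q haq)
            have q₂' := q'.transfer S₂ (htrans q' haq')
            refine ih S₂ hS₂m z' b c hzb hzc hbc ⟨q₂⟩ ⟨q₂'⟩ ?_ ?_ ?_ ?_
            · intro w w' hw hw'
              have hw1 := hS₂le hw
              have hw2 := hS₂le hw'
              rcases hmax z' w w' a hw1 hw2 h.symm with hh | hh | hh
              · exact hh
              · exfalso; subst hh
                rw [hS₂, deleteEdges_adj] at hw
                exact hw.2 (by simp [Sym2.eq_swap])
              · exfalso; subst hh
                rw [hS₂, deleteEdges_adj] at hw'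
                exact hw'.2 (by simp [Sym2.eq_swap])
            · exact fun w w' hw hw' => lb w w' (hS₂le hw) (hS₂le hw')
            · exact fun w w' hw hw' => lc w w' (hS₂le hw) (hS₂le hw')
            · exact fun v w₁ w₂ w₃ h1 h2 h3 =>
                hmax v w₁ w₂ w₃ (hS₂le h1) (hS₂le h2) (hS₂le h3)

/-! ### List helpers -/

theorem getLast?_mem {α : Type*} {l : List α} {a : α} (h : l.getLast? = some a) : a ∈ l := by
  cases l with
  | nil => simp at h
  | cons b t =>
    rw [List.getLast?_eq_getLast (by simp)] at h
    have h2 := Option.some.inj h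
    rw [← h2]
    exact List.getLast_mem _

theorem head?_eq_of_append {α : Type*} {s : List α} {u : α} {t : List α} :
    (s ++ [u]).head? = (s ++ u :: t).head? := by
  cases s <;> simp

theorem chain'_imp_mem {α : Type*} {R S : α → α → Prop} :
    ∀ (l : List α), List.IsChain R l →
      (∀ a b, a ∈ l.dropLast → b ∈ l → R a b → S a b) → List.IsChain S l := by
  intro l
  induction l with
  | nil => intro _ _; simp
  | cons a t iht =>
    intro hc himp
    cases t with
    | nil => simp
    | cons b t' =>
      rw [List.isChain_cons_cons] at hc ⊢
      constructor
      · exact himp a b (by simp) (by simp) hc.1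
      · refine iht hc.2 ?_
        intro a' b' ha' hb' hr
        refine himp a' b' ?_ (by simp [hb']) hr
        rw [List.dropLast_cons₂]
        exact List.mem_cons_of_mem _ ha'

/-! ### Chains (Vizing fan paths) -/

def Rel (H' : SimpleGraph V) (φ : Sym2 V → ℕ) (k : ℕ) (y : V) (u w : V) : Prop :=
  H'.Adj y w ∧ MissP H' φ k u (φ s(y, w))

def IsChain (H' : SimpleGraph V) (φ : Sym2 V → ℕ) (k : ℕ) (x y : V) (l : List V) : Prop :=
  l.head? = some x ∧ List.IsChain (Rel H' φ k y) l ∧ l.Nodup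

theorem chain_tail_adj {H' : SimpleGraph V} {φ : Sym2 V → ℕ} {k : ℕ} {y : V} :
    ∀ {l : List V}, List.IsChain (Rel H' φ k y) l → ∀ u ∈ l.tail, H'.Adj y u := by
  intro l
  induction l with
  | nil => intro _ u hu; simp at hu
  | cons a t iht =>
    intro hc u hu
    cases t with
    | nil => simp at hu
    | cons b t' =>
      rw [List.isChain_cons_cons] at hc
      rcases List.mem_cons.1 hu with rfl | hu'
      · exact hc.1.1
      · exact iht hc.2 u hu'

theorem chain_mem_ne {H' : SimpleGraph V} {φ : Sym2 V → ℕ} {k : ℕ} {x y : V} (hxy : x ≠ y)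
    {l : List V} (hl : IsChain H' φ k x y l) : ∀ u ∈ l, u ≠ y := by
  intro u hu
  cases l with
  | nil => simp at hu
  | cons a t =>
    have ha : a = x := by simpa using hl.1
    rcases List.mem_cons.1 hu with rfl | hu'
    · rw [ha]; exact hxy
    · exact (chain_tail_adj hl.2.1 u hu').ne'

/-- Recoloring along a Vizing fan chain: if some color is missing at the end of the chain
and at `y`, then the whole graph `H` admits a proper `k`-edge-coloring. -/
theorem chainA {H : SimpleGraph V} {k : ℕ} {x y : V} (hxy : H.Adj x y) :
    ∀ (l : List V) (φ : Sym2 V → ℕ),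
      IsProperEdgeColoring (H.deleteEdges {s(x, y)}) k φ →
      IsChain (H.deleteEdges {s(x, y)}) φ k x y l →
      ∀ w, l.getLast? = some w → ∀ γ,
        MissP (H.deleteEdges {s(x, y)}) φ k w γ →
        MissP (H.deleteEdges {s(x, y)}) φ k y γ →
        ∃ C, IsProperEdgeColoring H k C := by
  intro l
  induction l using List.reverseRecOn with
  | nil => intro φ _ _ w hw; simp at hw
  | append_singleton l' w ihl =>
    intro φ hφ hl w' hw' γ hmw hmy
    rw [List.getLast?_concat] at hw'
    obtain rfl : w = w' := Option.some.inj hw'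
    by_cases hnil : l' = []
    · subst hnil
      have hwx : w = x := by simpa using hl.1
      subst hwx
      exact ⟨_, extend_one hxy hφ hmw hmy⟩
    · obtain ⟨u, hu⟩ : ∃ u, l'.getLast? = some u :=
        ⟨l'.getLast hnil, List.getLast?_eq_getLast hnil⟩
      have hchain := hl.2.1
      rw [List.isChain_append] at hchain
      obtain ⟨hc1, -, hrel⟩ := hchain
      have hRuw : Rel (H.deleteEdges {s(x, y)}) φ k y u w := hrel u hu w rfl
      have hadj_yw : (H.deleteEdges {s(x, y)}).Adj y w := hRuw.1
      have hwl' : w ∉ l' := by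
        have hnd := hl.2.2
        rw [List.nodup_append] at hnd
        intro hwm
        exact hnd.2.2 w hwm w (by simp) rfl
      have hney : ∀ u' ∈ l', u' ≠ y := fun u' hu' =>
        chain_mem_ne hxy.ne hl u' (List.mem_append_left _ hu')
      have hupd_ne : ∀ (u' z : V), u' ≠ y → u' ≠ w →
          Function.update φ s(y, w) γ s(u', z) = φ s(u', z) := by
        intro u' z h1 h2
        apply Function.update_of_ne
        rw [Ne, Sym2.eq_iff]
        rintro (⟨rfl, -⟩ | ⟨rfl, -⟩)
        · exact h1 rfl
        · exact h2 rfl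
      have hψp : IsProperEdgeColoring (H.deleteEdges {s(x, y)}) k
          (Function.update φ s(y, w) γ) :=
        extend_one hadj_yw (proper_mono (deleteEdges_le _) hφ)
          (hmy.anti (deleteEdges_le _)) (hmw.anti (deleteEdges_le _))
      have hchain' : IsChain (H.deleteEdges {s(x, y)})
          (Function.update φ s(y, w) γ) k x y l' := by
        refine ⟨?_, ?_, ?_⟩
        · cases l' with
          | nil => exact absurd rfl hnil
          | cons a t => simpa using hl.1
        · refine chain'_imp_mem l' hc1 ?_
          rintro a b ha hb ⟨hadj, hmiss⟩
          have haw : a ≠ w := fun h => hwl' (h ▸ (List.dropLast_sublist l').subset ha)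
          have hbw : b ≠ w := fun h => hwl' (h ▸ hb)
          have hay : a ≠ y := hney a ((List.dropLast_sublist l').subset ha)
          refine ⟨hadj, ?_⟩
          rw [show Function.update φ s(y, w) γ s(y, b) = φ s(y, b) from
            Function.update_of_ne (by rw [Ne, Sym2.congr_right]; exact hbw) _ _]
          refine ⟨hmiss.1, fun z hz => ?_⟩
          rw [hupd_ne a z hay haw]
          exact hmiss.2 z hz
        · exact List.Nodup.sublist (List.sublist_append_left l' [w]) hl.2.2
      have huy : u ≠ y := hney u (getLast?_mem hu)
      have huw : u ≠ w := fun h => hwl' (h ▸ getLast?_mem hu)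
      have hc₀k : φ s(y, w) < k := proper_lt hφ hadj_yw
      have hmw' : MissP (H.deleteEdges {s(x, y)}) (Function.update φ s(y, w) γ) k u
          (φ s(y, w)) := by
        refine ⟨hc₀k, fun z hz => ?_⟩
        rw [hupd_ne u z huy huw]
        exact hRuw.2.2 z hz
      have hmy' : MissP (H.deleteEdges {s(x, y)}) (Function.update φ s(y, w) γ) k y
          (φ s(y, w)) := by
        refine ⟨hc₀k, fun z hz => ?_⟩
        by_cases hzw : z = w
        · subst hzw
          rw [Function.update_self]
          exact fun h => hmy.2 _ hadj_yw h.symm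
        · rw [Function.update_of_ne (by rw [Ne, Sym2.congr_right]; exact hzw) _ _]
          exact proper_ne hφ hz hadj_yw hzw
      exact ihl (Function.update φ s(y, w) γ) hψp hchain' u hu (φ s(y, w)) hmw' hmy'

/-- Kempe-chain lemma: the `(α,γ)`-chain from the end of a Vizing fan chain must reach `y`,
or else the whole graph can be colored. -/
theorem chainB {H : SimpleGraph V} {k : ℕ} {x y : V} (hxy : H.Adj x y) :
    ∀ (n : ℕ) (l : List V) (φ : Sym2 V → ℕ), l.length ≤ n →
      IsProperEdgeColoring (H.deleteEdges {s(x, y)}) k φ →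
      IsChain (H.deleteEdges {s(x, y)}) φ k x y l →
      ∀ w, l.getLast? = some w → ∀ γ α,
        MissP (H.deleteEdges {s(x, y)}) φ k w γ →
        MissP (H.deleteEdges {s(x, y)}) φ k y α →
        (∃ C, IsProperEdgeColoring H k C) ∨
          (colSub (H.deleteEdges {s(x, y)}) φ α γ).Reachable w y := by
  intro n
  induction n with
  | zero =>
    intro l φ hlen _ _ w hw γ α _ _
    rw [List.length_eq_zero_iff.1 (Nat.le_zero.1 hlen)] at hw
    simp at hw
  | succ n ih =>
    intro l φ hlen hφ hl w hw γ α hmγ hmα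
    rw [or_iff_not_imp_left]
    intro hcol
    by_contra hreach
    have hαγ : α ≠ γ := by
      rintro rfl
      exact hcol (chainA hxy l φ hφ hl w hw α hmγ hmα)
    have hyun : ∀ z : V, swapped (H.deleteEdges {s(x, y)}) φ α γ w s(y, z) = φ s(y, z) :=
      fun z => swapped_at_unreachable hreach z
    set φ'' := swapped (H.deleteEdges {s(x, y)}) φ α γ w with hφ''def
    have hφ''p : IsProperEdgeColoring (H.deleteEdges {s(x, y)}) k φ'' :=
      proper_swapped hφ hmα.1 hmγ.1 hαγ w
    have hkey : ∀ u₁ u₂ : V, u₁ ∈ l.dropLast → u₂ ∈ l →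
        Rel (H.deleteEdges {s(x, y)}) φ k y u₁ u₂ →
        Rel (H.deleteEdges {s(x, y)}) φ'' k y u₁ u₂ := by
      intro u₁ u₂ h1 h2 hR
      obtain ⟨hadj, hmiss⟩ := hR
      refine ⟨hadj, ?_⟩
      rw [hyun u₂]
      have hlnn : l ≠ [] := by rintro rfl; simp at hw
      have hu₁w : u₁ ≠ w := by
        intro h
        subst h
        have hsplit : l.dropLast ++ [l.getLast hlnn] = l := List.dropLast_append_getLast hlnn
        have hlast : l.getLast hlnn = u₁ := by
          have h3 := List.getLast?_eq_getLast hlnn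
          rw [hw] at h3
          exact (Option.some.inj h3).symm
        have hnd := hl.2.2
        rw [← hsplit, List.nodup_append] at hnd
        exact hnd.2.2 _ h1 _ (by simp [hlast]) rfl
      rcases eq_or_ne (φ s(y, u₂)) α with hcα | hcα
      · exact absurd hcα (hmα.2 u₂ hadj)
      rcases eq_or_ne (φ s(y, u₂)) γ with hcγ | hcγ
      · have hu₁l : u₁ ∈ l := (List.dropLast_sublist l).subset h1
        obtain ⟨s, t, rfl⟩ := List.append_of_mem hu₁l
        have htne : t ≠ [] := by
          rintro rfl
          exact hu₁w (Option.some.inj (List.getLast?_concat.symm.trans hw))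
        have hpre : IsChain (H.deleteEdges {s(x, y)}) φ k x y (s ++ [u₁]) := by
          refine ⟨?_, ?_, ?_⟩
          · rw [head?_eq_of_append (t := t)]
            exact hl.1
          · exact hl.2.1.prefix ⟨t, by simp⟩
          · exact List.Nodup.sublist (List.IsPrefix.sublist ⟨t, by simp⟩) hl.2.2
        have hlen' : (s ++ [u₁]).length ≤ n := by
          have ht1 : 1 ≤ t.length := List.length_pos_iff.2 htne
          simp only [List.length_append, List.length_cons, List.length_nil] at hlen ⊢
          omega
        have hMu₁ : MissP (H.deleteEdges {s(x, y)}) φ k u₁ γ := hcγ ▸ hmiss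
        rcases ih (s ++ [u₁]) φ hlen' hφ hpre u₁ List.getLast?_concat γ α hMu₁ hmα with
          hC | hRu
        · exact absurd hC hcol
        · have hnr : ¬ (colSub (H.deleteEdges {s(x, y)}) φ α γ).Reachable w u₁ :=
            fun hr => hreach (hr.trans hRu)
          rw [hcγ]
          exact MissP_swap_unreach hnr hMu₁
      · exact MissP_swap_other hcα hcγ hmiss
    have hch'' : IsChain (H.deleteEdges {s(x, y)}) φ'' k x y l :=
      ⟨hl.1, chain'_imp_mem l hl.2.1 hkey, hl.2.2⟩
    have h1 : MissP (H.deleteEdges {s(x, y)}) φ'' k w α := MissP_swap_base hmγ hmα.1 hαγ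
    have h2 : MissP (H.deleteEdges {s(x, y)}) φ'' k y α :=
      ⟨hmα.1, fun z hz => by rw [hyun z]; exact hmα.2 z hz⟩
    exact absurd (chainA hxy l φ'' hφ''p hch'' w hw α h1 h2) hcol

/-! ### Fans and Vizing's adjacency lemma -/

inductive InFan (H' : SimpleGraph V) (φ : Sym2 V → ℕ) (k : ℕ) (x y : V) : V → Prop
  | base : InFan H' φ k x y x
  | step (u w : V) : InFan H' φ k x y u → H'.Adj y w → MissP H' φ k u (φ s(y, w)) →
      InFan H' φ k x y w

theorem fan_chain {H' : SimpleGraph V} {φ : Sym2 V → ℕ} {k : ℕ} {x y : V} {u : V}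
    (h : InFan H' φ k x y u) : ∃ l, IsChain H' φ k x y l ∧ l.getLast? = some u := by
  induction h with
  | base => exact ⟨[x], ⟨rfl, List.isChain_singleton x, List.nodup_singleton x⟩, rfl⟩
  | step v w hv hadj hmiss ih =>
    obtain ⟨l, hl, hlast⟩ := ih
    by_cases hwl : w ∈ l
    · obtain ⟨s, t, rfl⟩ := List.append_of_mem hwl
      refine ⟨s ++ [w], ⟨?_, ?_, ?_⟩, List.getLast?_concat⟩
      · rw [head?_eq_of_append (t := t)]
        exact hl.1
      · exact hl.2.1.prefix ⟨t, by simp⟩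
      · exact List.Nodup.sublist (List.IsPrefix.sublist ⟨t, by simp⟩) hl.2.2
    · have hlnn : l ≠ [] := by rintro rfl; simp at hlast
      refine ⟨l ++ [w], ⟨?_, ?_, ?_⟩, List.getLast?_concat⟩
      · rw [List.head?_append, hl.1]
        rfl
      · rw [List.isChain_append]
        refine ⟨hl.2.1, List.isChain_singleton w, ?_⟩
        intro a ha b hb
        rw [hlast] at ha
        simp only [Option.mem_def, Option.some.injEq, List.head?_cons] at ha hb
        rw [← ha, ← hb]
        exact ⟨hadj, hmiss⟩
      · rw [List.nodup_append]
        refine ⟨hl.2.2, List.nodup_singleton w, ?_⟩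
        intro a hal b haw hab
        simp only [List.mem_singleton] at haw
        subst haw
        subst hab
        exact hwl hal

/-- Two distinct fan vertices cannot miss a common color. -/
theorem fan_elem {H : SimpleGraph V} [DecidableRel H.Adj] {k : ℕ} {x y : V} (hxy : H.Adj x y)
    (hnc : ¬∃ C, IsProperEdgeColoring H k C)
    {φ : Sym2 V → ℕ} (hφ : IsProperEdgeColoring (H.deleteEdges {s(x, y)}) k φ)
    (hdy : H.degree y ≤ k)
    {l₁ l₂ : List V} {u u' : V}
    (hc₁ : IsChain (H.deleteEdges {s(x, y)}) φ k x y l₁) (he₁ : l₁.getLast? = some u)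
    (hc₂ : IsChain (H.deleteEdges {s(x, y)}) φ k x y l₂) (he₂ : l₂.getLast? = some u')
    (huu : u ≠ u') {γ : ℕ}
    (h₁ : MissP (H.deleteEdges {s(x, y)}) φ k u γ)
    (h₂ : MissP (H.deleteEdges {s(x, y)}) φ k u' γ) : False := by
  classical
  letI : DecidableRel (H.deleteEdges {s(x, y)}).Adj := Classical.decRel _
  -- find a color missing at y
  have hnbr : (H.deleteEdges {s(x, y)}).neighborFinset y = (H.neighborFinset y).erase x := by
    ext z
    rw [memN, Finset.mem_erase, memN, deleteEdges_adj]
    constructor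
    · rintro ⟨hadj, hne⟩
      refine ⟨?_, hadj⟩
      rintro rfl
      exact hne (by simp [Sym2.eq_swap])
    · rintro ⟨hzx, hadj⟩
      refine ⟨hadj, ?_⟩
      intro hmem
      rw [Set.mem_singleton_iff, Sym2.eq_iff] at hmem
      rcases hmem with ⟨h1, -⟩ | ⟨-, h2⟩
      · exact hxy.ne' h1
      · exact hzx h2
  have hdylt : (H.deleteEdges {s(x, y)}).degree y < k := by
    rw [← card_neighborFinset_eq_degree, hnbr,
      Finset.card_erase_of_mem (memN.2 hxy.symm)]
    have h1 : 1 ≤ (H.neighborFinset y).card := Finset.card_pos.2 ⟨x, memN.2 hxy.symm⟩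
    have h2 : (H.neighborFinset y).card = H.degree y := card_neighborFinset_eq_degree H y
    omega
  obtain ⟨α, hmα⟩ : ∃ α, MissP (H.deleteEdges {s(x, y)}) φ k y α := by
    have hns : ¬ (Finset.range k ⊆
        ((H.deleteEdges {s(x, y)}).neighborFinset y).image fun z => φ s(y, z)) := by
      intro hsubs
      have h1 := Finset.card_le_card hsubs
      have h2 := Finset.card_image_le
        (s := (H.deleteEdges {s(x, y)}).neighborFinset y) (f := fun z => φ s(y, z))
      rw [Finset.card_range] at h1
      rw [card_neighborFinset_eq_degree] at h2
      omega
    obtain ⟨α, hαr, hαn⟩ := Finset.not_subset.1 hns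
    refine ⟨α, Finset.mem_range.1 hαr, fun z hz hc => hαn ?_⟩
    exact Finset.mem_image.2 ⟨z, memN.2 hz, hc⟩
  have hr₁ : (colSub (H.deleteEdges {s(x, y)}) φ α γ).Reachable u y := by
    rcases chainB hxy l₁.length l₁ φ le_rfl hφ hc₁ u he₁ γ α h₁ hmα with hC | hr
    · exact absurd hC hnc
    · exact hr
  have hr₂ : (colSub (H.deleteEdges {s(x, y)}) φ α γ).Reachable u' y := by
    rcases chainB hxy l₂.length l₂ φ le_rfl hφ hc₂ u' he₂ γ α h₂ hmα with hC | hr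
    · exact absurd hC hnc
    · exact hr
  have huy : u ≠ y := chain_mem_ne hxy.ne hc₁ u (getLast?_mem he₁)
  have huy' : u' ≠ y := chain_mem_ne hxy.ne hc₂ u' (getLast?_mem he₂)
  exact three_low (mS (colSub (H.deleteEdges {s(x, y)}) φ α γ))
    (colSub (H.deleteEdges {s(x, y)}) φ α γ) le_rfl y u u'
    (Ne.symm huy) (Ne.symm huy') huu hr₁.symm hr₂.symm
    (low_of_miss hφ (Or.inl rfl) hmα.2)
    (low_of_miss hφ (Or.inr rfl) h₁.2)
    (low_of_miss hφ (Or.inr rfl) h₂.2)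
    (colSub_max hφ)

/-- Vizing's adjacency lemma for an edge-minimal non-`k`-colorable graph. -/
theorem VAL {H : SimpleGraph V} [DecidableRel H.Adj] {k : ℕ} {x y : V} (hxy : H.Adj x y)
    (hdeg : ∀ v, H.degree v ≤ k)
    (hnc : ¬∃ C, IsProperEdgeColoring H k C)
    (hex : ∃ φ, IsProperEdgeColoring (H.deleteEdges {s(x, y)}) k φ) :
    k + 1 ≤ H.degree x +
      (((H.neighborFinset y).erase x).filter (fun z => H.degree z = k)).card := by
  classical
  obtain ⟨φ, hφ⟩ := hex
  letI : DecidableRel (H.deleteEdges {s(x, y)}).Adj := Classical.decRel _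
  have hxyne : x ≠ y := hxy.ne
  set F : Finset V :=
    Finset.univ.filter (InFan (H.deleteEdges {s(x, y)}) φ k x y) with hFdef
  have hmemF : ∀ u, u ∈ F ↔ InFan (H.deleteEdges {s(x, y)}) φ k x y u := by
    intro u
    rw [hFdef]
    simp
  have hxF : x ∈ F := (hmemF x).2 InFan.base
  have hF_struct : ∀ u ∈ F, u = x ∨ (H.deleteEdges {s(x, y)}).Adj y u := by
    intro u hu
    have h1 := (hmemF u).1 hu
    cases h1 with
    | base => exact Or.inl rfl
    | step v w2 hfan hadj hmiss => exact Or.inr hadj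
  set miss : V → Finset ℕ := fun u =>
    (Finset.range k).filter
      (fun c => ∀ z, (H.deleteEdges {s(x, y)}).Adj u z → φ s(u, z) ≠ c) with hmissdef
  have hmiss_iff : ∀ u c, c ∈ miss u ↔ MissP (H.deleteEdges {s(x, y)}) φ k u c := by
    intro u c
    rw [hmissdef]
    simp only [Finset.mem_filter, Finset.mem_range]
    exact Iff.rfl
  have hchain : ∀ u ∈ F, ∃ l, IsChain (H.deleteEdges {s(x, y)}) φ k x y l ∧
      l.getLast? = some u := fun u hu => fan_chain ((hmemF u).1 hu)
  have hA : ∀ u ∈ F, ∀ γ, MissP (H.deleteEdges {s(x, y)}) φ k u γ →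
      ¬ MissP (H.deleteEdges {s(x, y)}) φ k y γ := by
    intro u hu γ hγ hy
    obtain ⟨l, hl, hlast⟩ := hchain u hu
    exact hnc (chainA hxy l φ hφ hl u hlast γ hγ hy)
  have hdisj : ∀ u ∈ F, ∀ u' ∈ F, u ≠ u' → Disjoint (miss u) (miss u') := by
    intro u hu u' hu' hne
    rw [Finset.disjoint_left]
    intro γ hγ hγ'
    obtain ⟨l₁, hl₁, he₁⟩ := hchain u hu
    obtain ⟨l₂, hl₂, he₂⟩ := hchain u' hu'
    exact fan_elem hxy hnc hφ (hdeg y) hl₁ he₁ hl₂ he₂ hne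
      ((hmiss_iff _ _).1 hγ) ((hmiss_iff _ _).1 hγ')
  set F' := F.erase x with hF'def
  set colF : Finset ℕ := F'.image (fun z => φ s(y, z)) with hcolFdef
  have hsub : ∀ u ∈ F, miss u ⊆ colF := by
    intro u hu γ hγ
    have hγM := (hmiss_iff u γ).1 hγ
    have hnotY : ¬ MissP (H.deleteEdges {s(x, y)}) φ k y γ := hA u hu γ hγM
    have hex2 : ∃ z, (H.deleteEdges {s(x, y)}).Adj y z ∧ φ s(y, z) = γ := by
      by_contra hno
      push_neg at hno
      exact hnotY ⟨hγM.1, fun z hz => hno z hz⟩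
    obtain ⟨z, hz, hzc⟩ := hex2
    have hzF : InFan (H.deleteEdges {s(x, y)}) φ k x y z :=
      InFan.step u z ((hmemF u).1 hu) hz (by rw [hzc]; exact hγM)
    have hzx : z ≠ x := by
      intro hzx
      subst hzx
      rw [deleteEdges_adj] at hz
      exact hz.2 (by simp [Sym2.eq_swap])
    rw [hcolFdef]
    exact Finset.mem_image.2 ⟨z, Finset.mem_erase.2 ⟨hzx, (hmemF z).2 hzF⟩, hzc⟩
  have hsum : (∑ u ∈ F, (miss u).card) ≤ F'.card := by
    rw [← Finset.card_biUnion hdisj]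
    have hsub2 : F.biUnion miss ⊆ colF := by
      intro c hc
      obtain ⟨u, hu, hcu⟩ := Finset.mem_biUnion.1 hc
      exact hsub u hu hcu
    refine le_trans (Finset.card_le_card hsub2) ?_
    rw [hcolFdef]
    exact Finset.card_image_le
  have hdegH' : ∀ u : V, u ≠ x → u ≠ y →
      (H.deleteEdges {s(x, y)}).degree u = H.degree u := by
    intro u hu1 hu2
    have hnb : (H.deleteEdges {s(x, y)}).neighborFinset u = H.neighborFinset u := by
      ext z
      rw [memN, memN, deleteEdges_adj]
      constructor
      · exact fun h => h.1
      · intro h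
        refine ⟨h, ?_⟩
        intro hmem
        rw [Set.mem_singleton_iff, Sym2.eq_iff] at hmem
        rcases hmem with ⟨rfl, -⟩ | ⟨rfl, -⟩
        · exact hu1 rfl
        · exact hu2 rfl
    rw [← card_neighborFinset_eq_degree, ← card_neighborFinset_eq_degree, hnb]
  have hdegH'x : (H.deleteEdges {s(x, y)}).degree x + 1 = H.degree x := by
    have hnb : (H.deleteEdges {s(x, y)}).neighborFinset x = (H.neighborFinset x).erase y := by
      ext z
      rw [memN, Finset.mem_erase, memN, deleteEdges_adj]
      constructor
      · rintro ⟨hadj, hne⟩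
        refine ⟨?_, hadj⟩
        rintro rfl
        exact hne (by simp)
      · rintro ⟨hzy, hadj⟩
        refine ⟨hadj, ?_⟩
        intro hmem
        rw [Set.mem_singleton_iff, Sym2.eq_iff] at hmem
        rcases hmem with ⟨-, h2⟩ | ⟨h1, -⟩
        · exact hzy h2
        · exact hxyne h1
    rw [← card_neighborFinset_eq_degree, ← card_neighborFinset_eq_degree, hnb,
      Finset.card_erase_of_mem (memN.2 hxy)]
    have h1 : 1 ≤ (H.neighborFinset x).card :=
      Finset.card_pos.2 ⟨y, memN.2 hxy⟩
    omega
  have hdegH'le : ∀ u : V, (H.deleteEdges {s(x, y)}).degree u ≤ k := by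
    intro u
    refine le_trans ?_ (hdeg u)
    rw [← card_neighborFinset_eq_degree, ← card_neighborFinset_eq_degree]
    refine Finset.card_le_card ?_
    intro z hz
    rw [mem_neighborFinset] at hz ⊢
    exact hz.1
  have hmisscard : ∀ u, (miss u).card + (H.deleteEdges {s(x, y)}).degree u = k := by
    intro u
    have himg : (((H.deleteEdges {s(x, y)}).neighborFinset u).image (fun z => φ s(u, z))) ⊆
        Finset.range k := by
      intro c hc
      obtain ⟨z, hz, rfl⟩ := Finset.mem_image.1 hc
      exact Finset.mem_range.2 (proper_lt hφ (memN.1 hz))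
    have hinj : Set.InjOn (fun z => φ s(u, z))
        ((H.deleteEdges {s(x, y)}).neighborFinset u) := by
      intro z1 h1 z2 h2 heq
      by_contra hne
      exact proper_ne hφ (memN.1 h1) (memN.1 h2) hne heq
    have hmiss_eq : miss u = Finset.range k \
        (((H.deleteEdges {s(x, y)}).neighborFinset u).image (fun z => φ s(u, z))) := by
      ext c
      rw [hmissdef]
      simp only [Finset.mem_filter, Finset.mem_sdiff, Finset.mem_image, mem_neighborFinset,
        not_exists]
      constructor
      · rintro ⟨hr, hall⟩
        exact ⟨hr, fun z hz => hall z hz.1 hz.2⟩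
      · rintro ⟨hr, hnex⟩
        exact ⟨hr, fun z hz hc => hnex z ⟨hz, hc⟩⟩
    have hcard_img :
        ((((H.deleteEdges {s(x, y)}).neighborFinset u).image (fun z => φ s(u, z)))).card =
        (H.deleteEdges {s(x, y)}).degree u := by
      rw [Finset.card_image_of_injOn hinj, card_neighborFinset_eq_degree]
    rw [hmiss_eq, Finset.card_sdiff_of_subset himg, Finset.card_range, hcard_img]
    have := hdegH'le u
    omega
  have hsum_split : (miss x).card + ∑ u ∈ F', (miss u).card = ∑ u ∈ F, (miss u).card := by
    rw [hF'def]
    exact Finset.add_sum_erase F (fun u => (miss u).card) hxF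
  have hF'deg : ∀ u ∈ F', (miss u).card + H.degree u = k := by
    intro u hu
    have hux : u ≠ x := (Finset.mem_erase.1 hu).1
    have huF : u ∈ F := (Finset.mem_erase.1 hu).2
    have huy : u ≠ y := by
      rcases hF_struct u huF with h | h
      · exact absurd h hux
      · exact h.ne'
    rw [← hdegH' u hux huy]
    exact hmisscard u
  set A := F'.filter (fun u => H.degree u = k) with hAdef
  set B := F'.filter (fun u => ¬ H.degree u = k) with hBdef
  have hAB : A.card + B.card = F'.card := Finset.card_filter_add_card_filter_not _
  have hBle : B.card ≤ ∑ u ∈ B, (miss u).card := by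
    have h1 : ∀ u ∈ B, 1 ≤ (miss u).card := by
      intro u hu
      rw [hBdef] at hu
      have h2 := Finset.mem_filter.1 hu
      have h3 := hF'deg u h2.1
      have h4 := hdeg u
      have h5 := h2.2
      omega
    calc B.card = ∑ _u ∈ B, 1 := by simp
      _ ≤ ∑ u ∈ B, (miss u).card := Finset.sum_le_sum h1
  have hBsub : ∑ u ∈ B, (miss u).card ≤ ∑ u ∈ F', (miss u).card := by
    refine Finset.sum_le_sum_of_subset ?_
    rw [hBdef]
    exact Finset.filter_subset _ _
  have hmx : (miss x).card + H.degree x = k + 1 := by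
    have h1 := hmisscard x
    omega
  have hAcard : k + 1 ≤ H.degree x + A.card := by
    have h1 : (miss x).card + ∑ u ∈ F', (miss u).card ≤ F'.card := by
      rw [hsum_split]
      exact hsum
    have h2 := le_trans hBle hBsub
    omega
  refine le_trans hAcard ?_
  have hAsub : A ⊆ ((H.neighborFinset y).erase x).filter (fun z => H.degree z = k) := by
    intro u hu
    rw [hAdef] at hu
    have h1 := Finset.mem_filter.1 hu
    have hux : u ≠ x := (Finset.mem_erase.1 h1.1).1
    have huF : u ∈ F := (Finset.mem_erase.1 h1.1).2
    have hadj : (H.deleteEdges {s(x, y)}).Adj y u := by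
      rcases hF_struct u huF with h | h
      · exact absurd h hux
      · exact h
    refine Finset.mem_filter.2 ⟨Finset.mem_erase.2 ⟨hux, memN.2 ?_⟩, h1.2⟩
    exact (deleteEdges_le _) hadj
  have := Finset.card_le_card hAsub
  omega

end HZ


/-- If `G` is an HZ-graph (connected, Class 2, with `Δ(G_Δ) ≤ 2`), then the core `G_Δ`
is 2-regular: every vertex of degree `Δ` has exactly two neighbors of degree `Δ`. -/
theorem hz_core_two_regular {V : Type*} [Fintype V] [DecidableEq V]
    (G : SimpleGraph V) [DecidableRel G.Adj]
    (hconn : G.Connected)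
    (hclass2 : chromaticIndex G = G.maxDegree + 1)
    (hcore : ∀ v : V, G.degree v = G.maxDegree →
      ((G.neighborFinset v).filter (fun w => G.degree w = G.maxDegree)).card ≤ 2) :
    ∀ v : V, G.degree v = G.maxDegree →
      ((G.neighborFinset v).filter (fun w => G.degree w = G.maxDegree)).card = 2 := by
  classical
  intro v hv
  obtain ⟨k, hk⟩ : ∃ k, G.maxDegree = k := ⟨G.maxDegree, rfl⟩
  rw [hk] at hv hclass2 hcore ⊢
  -- G admits no proper k-edge-coloring
  have hncG : ¬∃ C, IsProperEdgeColoring G k C := by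
    rintro ⟨C, hC⟩
    have h1 : chromaticIndex G ≤ k := Nat.sInf_le ⟨C, hC⟩
    rw [hclass2] at h1
    omega
  -- a minimal non-k-colorable subgraph H of G
  set 𝒮 : Set ℕ :=
    {n | ∃ H : SimpleGraph V, H ≤ G ∧ (¬∃ C, IsProperEdgeColoring H k C) ∧ HZ.mS H = n}
    with h𝒮def
  have h𝒮ne : 𝒮.Nonempty := ⟨HZ.mS G, ⟨G, le_rfl, hncG, rfl⟩⟩
  obtain ⟨H, hHG, hHnc, hHm⟩ := Nat.sInf_mem h𝒮ne
  letI : DecidableRel H.Adj := Classical.decRel _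
  have hmin : ∀ a b : V, H.Adj a b →
      ∃ C, IsProperEdgeColoring (H.deleteEdges {s(a, b)}) k C := by
    intro a b hab
    by_contra hnex
    have hmem : HZ.mS (H.deleteEdges {s(a, b)}) ∈ 𝒮 :=
      ⟨H.deleteEdges {s(a, b)}, le_trans (deleteEdges_le _) hHG, hnex, rfl⟩
    have h1 := Nat.sInf_le hmem
    have h2 := HZ.mS_lt hab
    omega
  have hdegHG : ∀ u : V, H.degree u ≤ G.degree u := by
    intro u
    rw [← card_neighborFinset_eq_degree, ← card_neighborFinset_eq_degree]
    refine Finset.card_le_card ?_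
    intro z hz
    rw [HZ.memN] at hz ⊢
    exact hHG hz
  have hdegH : ∀ u, H.degree u ≤ k := fun u => le_trans (hdegHG u) (hk ▸ G.degree_le_maxDegree u)
  have hVAL : ∀ a b : V, H.Adj a b → k + 1 ≤ H.degree a +
      (((H.neighborFinset b).erase a).filter (fun z => H.degree z = k)).card :=
    fun a b hab => HZ.VAL hab hdegH hHnc (hmin a b hab)
  -- H has an edge
  have hedge : ∃ a b : V, H.Adj a b := by
    by_contra hno
    push_neg at hno
    have hempty : ∀ e, e ∉ H.edgeSet := by
      intro e
      induction e using Sym2.ind with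
      | _ a b => exact fun he => hno a b (H.mem_edgeSet.1 he)
    exact hHnc ⟨fun _ => 0, fun e he => absurd he (hempty e),
      fun e₁ h₁ e₂ h₂ hne hsh => absurd h₁ (hempty e₁)⟩
  obtain ⟨a₀, b₀, hab₀⟩ := hedge
  have hk1 : 1 ≤ k := by
    have h1 : 1 ≤ H.degree a₀ := by
      rw [← card_neighborFinset_eq_degree]
      exact Finset.card_pos.2 ⟨b₀, HZ.memN.2 hab₀⟩
    exact le_trans h1 (hdegH a₀)
  -- every supported vertex has an H-neighbor of H-degree k
  have g2 : ∀ u : V, (∃ w, H.Adj u w) → ∃ z, H.Adj u z ∧ H.degree z = k := by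
    rintro u ⟨w, hw⟩
    have h1 := hVAL w u hw.symm
    have h2 := hdegH w
    have h3 : 1 ≤ (((H.neighborFinset u).erase w).filter (fun z => H.degree z = k)).card := by
      omega
    obtain ⟨z, hz⟩ := Finset.card_pos.1 h3
    have h4 := Finset.mem_filter.1 hz
    exact ⟨z, HZ.memN.1 (Finset.mem_of_mem_erase h4.1), h4.2⟩
  -- every H-degree-k vertex has two H-neighbors of H-degree k
  have g3 : ∀ u : V, H.degree u = k →
      2 ≤ ((H.neighborFinset u).filter (fun z => H.degree z = k)).card := by
    intro u hu
    have hsup : ∃ w, H.Adj u w := by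
      have h1 : 0 < (H.neighborFinset u).card := by
        rw [card_neighborFinset_eq_degree, hu]
        omega
      obtain ⟨w, hw⟩ := Finset.card_pos.1 h1
      exact ⟨w, HZ.memN.1 hw⟩
    obtain ⟨z, hz, hzk⟩ := g2 u hsup
    have h1 := hVAL z u hz.symm
    rw [hzk] at h1
    have h3 : ((H.neighborFinset u).erase z).filter (fun w => H.degree w = k)
        = ((H.neighborFinset u).filter (fun w => H.degree w = k)).erase z := by
      ext w
      simp only [Finset.mem_filter, Finset.mem_erase]
      tauto
    have hzmem : z ∈ (H.neighborFinset u).filter (fun w => H.degree w = k) :=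
      Finset.mem_filter.2 ⟨HZ.memN.2 hz, hzk⟩
    have h4 := Finset.card_erase_of_mem hzmem
    rw [h3, h4] at h1
    omega
  -- H-core is contained in the G-core
  have hkG : ∀ u : V, H.degree u = k → G.degree u = k := fun u hu =>
    le_antisymm (hk ▸ G.degree_le_maxDegree u) (hu ▸ hdegHG u)
  -- supported vertices have equal degrees in H and G
  have hdd : ∀ u : V, (∃ w, H.Adj u w) → H.degree u = G.degree u := by
    intro u hsup
    by_cases hu : H.degree u = k
    · rw [hu, hkG u hu]
    · obtain ⟨z, hz, hzk⟩ := g2 u hsup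
      have hGz : G.degree z = k := hkG z hzk
      have hHGfilter : (H.neighborFinset z).filter (fun w => H.degree w = k) ⊆
          (G.neighborFinset z).filter (fun w => G.degree w = k) := by
        intro w hw
        have h1 := Finset.mem_filter.1 hw
        exact Finset.mem_filter.2 ⟨HZ.memN.2 (hHG (HZ.memN.1 h1.1)), hkG w h1.2⟩
      have hGcard := hcore z hGz
      have h1 := hVAL u z hz
      have hsub2 : ((H.neighborFinset z).erase u).filter (fun w => H.degree w = k) ⊆
          (G.neighborFinset z).filter (fun w => G.degree w = k) := by
        intro w hw
        have h2 := Finset.mem_filter.1 hw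
        exact hHGfilter (Finset.mem_filter.2 ⟨Finset.mem_of_mem_erase h2.1, h2.2⟩)
      have h3 := Finset.card_le_card hsub2
      have hGu : ¬ G.degree u = k := by
        intro hGu
        have hM := g3 z hzk
        have hMeq : (H.neighborFinset z).filter (fun w => H.degree w = k) =
            (G.neighborFinset z).filter (fun w => G.degree w = k) := by
          apply Finset.eq_of_subset_of_card_le hHGfilter
          have h4 := Finset.card_le_card hHGfilter
          omega
        have humem : u ∈ (G.neighborFinset z).filter (fun w => G.degree w = k) :=
          Finset.mem_filter.2 ⟨HZ.memN.2 (hHG hz.symm), hGu⟩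
        rw [← hMeq] at humem
        exact hu (Finset.mem_filter.1 humem).2
      have h5 := hdegHG u
      have h6 := hk ▸ G.degree_le_maxDegree u
      omega
  -- supported vertices have the same neighbors in H and G
  have hNeq : ∀ u : V, (∃ w, H.Adj u w) → ∀ z, G.Adj u z → H.Adj u z := by
    intro u hsup z hz
    have h1 : H.neighborFinset u = G.neighborFinset u := by
      apply Finset.eq_of_subset_of_card_le
      · intro w hw
        exact HZ.memN.2 (hHG (HZ.memN.1 hw))
      · rw [card_neighborFinset_eq_degree, card_neighborFinset_eq_degree, hdd u hsup]
    have h2 : z ∈ G.neighborFinset u := HZ.memN.2 hz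
    rw [← h1] at h2
    exact HZ.memN.1 h2
  -- all vertices are supported (G is connected)
  have hall : ∀ u : V, ∃ w, H.Adj u w := by
    have hwalk : ∀ (a u : V) (p : G.Walk a u), (∃ w, H.Adj a w) → ∃ w, H.Adj u w := by
      intro a u p
      induction p with
      | nil => exact id
      | cons h p ih =>
        intro hs
        refine ih ⟨_, (hNeq _ hs _ h).symm⟩
    intro u
    obtain ⟨p⟩ := hconn.preconnected a₀ u
    exact hwalk a₀ u p ⟨b₀, hab₀⟩
  -- conclusion
  have hvH : H.degree v = k := by
    rw [hdd v (hall v)]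
    exact hv
  have h2 := g3 v hvH
  have hsubfin : (H.neighborFinset v).filter (fun w => H.degree w = k) ⊆
      (G.neighborFinset v).filter (fun w => G.degree w = k) := by
    intro w hw
    have h1 := Finset.mem_filter.1 hw
    exact Finset.mem_filter.2 ⟨HZ.memN.2 (hHG (HZ.memN.1 h1.1)), hkG w h1.2⟩
  have h3 := Finset.card_le_card hsubfin
  have h4 := hcore v hv
  omega
end
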